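/- arXiv:2103.01061 — 4 statements merged into one kernel-verified Lean document; each statement's English description precedes it below -/
import Mathlib

section
/- For any finite-dimensional density matrix ρ, the von Neumann entropy S(ρ) = −tr(ρ log ρ) is at most the Shannon entropy of the diagonal of ρ in any orthonormal basis: S(ρ) ≤ −∑_j ρ_jj log ρ_jj. -/
open scoped ComplexOrder

/-!
Write `ρ = W diag(λ) W*` with `W` unitary. Then `U* ρ U = M* diag(λ) M` for the unitary
`M = W* U`, so the diagonal of `U* ρ U` is `λ P` where `P i j = |M i j|²` is doubly stochastic.
Each diagonal entry is thus a convex combination of the eigenvalues (column sums of `P` are 1),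
and Jensen's inequality for the concave function `x ↦ -x log x`, summed over the columns,
gives the claim once the row sums of `P` (also 1) are used to rewrite the entropy of `λ`.
-/

open Finset Matrix

namespace Matrix

variable {𝕜 n : Type*} [RCLike 𝕜] [Fintype n] [DecidableEq n]

theorem sum_norm_sq_row_eq_one_of_mul_star_self {U : Matrix n n 𝕜} (hU : U * star U = 1)
    (i : n) : ∑ j, ‖U i j‖ ^ 2 = 1 := by
  have h := congr_fun₂ hU i i
  simp only [mul_apply, star_apply, RCLike.star_def, RCLike.mul_conj, one_apply_eq] at h
  exact_mod_cast h

theorem norm_sq_mem_doublyStochastic_of_mem_unitaryGroup {U : Matrix n n 𝕜}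
    (hU : U ∈ unitaryGroup n 𝕜) : (of fun i j ↦ ‖U i j‖ ^ 2) ∈ doublyStochastic ℝ n := by
  refine mem_doublyStochastic_iff_sum.2
    ⟨fun i j ↦ by simp only [of_apply]; positivity, fun i ↦ ?_, fun j ↦ ?_⟩
  · exact sum_norm_sq_row_eq_one_of_mul_star_self (mem_unitaryGroup_iff.1 hU) i
  · simpa [star_apply] using sum_norm_sq_row_eq_one_of_mul_star_self (U := star U)
      (by rw [star_star]; exact mem_unitaryGroup_iff'.1 hU) j

theorem star_mul_diagonal_mul_apply_self (M : Matrix n n 𝕜) (d : n → ℝ) (j : n) :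
    (star M * diagonal (RCLike.ofReal ∘ d) * M : Matrix n n 𝕜) j j
      = ∑ i, (d i * ‖M i j‖ ^ 2 : ℝ) := by
  simp only [mul_apply (M := _ * diagonal _), mul_diagonal, star_apply, RCLike.star_def,
    Function.comp_apply]
  push_cast
  refine sum_congr rfl fun i _ ↦ ?_
  rw [← RCLike.conj_mul]
  ring

namespace IsHermitian

variable {A : Matrix n n 𝕜}

theorem star_mul_mul_eq_star_mul_diagonal_mul (hA : A.IsHermitian) (U : Matrix n n 𝕜) :
    star U * A * U = star (star (hA.eigenvectorUnitary : Matrix n n 𝕜) * U) *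
      diagonal (RCLike.ofReal ∘ hA.eigenvalues) *
        (star (hA.eigenvectorUnitary : Matrix n n 𝕜) * U) := by
  conv_lhs => rw [hA.spectral_theorem]
  simp only [Unitary.conjStarAlgAut_apply, star_mul, star_star, mul_assoc]

theorem re_star_mul_mul_apply_self (hA : A.IsHermitian) (U : Matrix n n 𝕜) (j : n) :
    RCLike.re ((star U * A * U) j j) = (hA.eigenvalues ᵥ*
      of fun i j ↦ ‖(star (hA.eigenvectorUnitary : Matrix n n 𝕜) * U) i j‖ ^ 2) j := by
  rw [hA.star_mul_mul_eq_star_mul_diagonal_mul, star_mul_diagonal_mul_apply_self,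
    RCLike.ofReal_re]
  rfl

end IsHermitian

end Matrix

theorem ConcaveOn.sum_le_sum_map_vecMul {R n : Type*} [Field R] [LinearOrder R]
    [IsStrictOrderedRing R] [Fintype n] [DecidableEq n] {s : Set R} {f : R → R}
    (hf : ConcaveOn R s f) {P : Matrix n n R} (hP : P ∈ doublyStochastic R n) {x : n → R}
    (hx : ∀ i, x i ∈ s) :
    ∑ i, f (x i) ≤ ∑ j, f ((x ᵥ* P) j) :=
  calc ∑ i, f (x i) = ∑ j, ∑ i, P i j * f (x i) := by
        simp only [sum_comm (γ := n), ← sum_mul, sum_row_of_mem_doublyStochastic hP, one_mul]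
    _ ≤ ∑ j, f ((x ᵥ* P) j) := sum_le_sum fun j _ ↦ by
        simpa [vecMul, dotProduct, mul_comm] using hf.le_map_sum (t := univ)
          (fun i _ ↦ nonneg_of_mem_doublyStochastic hP)
          (sum_col_of_mem_doublyStochastic hP j) fun i _ ↦ hx i

theorem vonNeumann_entropy_le_diagonal_shannon_general {N : ℕ}
    (ρ : Matrix (Fin N) (Fin N) ℂ)
    (hρ : ρ.PosSemidef)
    (U : Matrix.unitaryGroup (Fin N) ℂ) :
    -∑ i, hρ.1.eigenvalues i * Real.log (hρ.1.eigenvalues i)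
      ≤ -∑ j, ((star (U : Matrix (Fin N) (Fin N) ℂ) * ρ * (U : Matrix (Fin N) (Fin N) ℂ)) j j).re
          * Real.log (((star (U : Matrix (Fin N) (Fin N) ℂ) * ρ *
              (U : Matrix (Fin N) (Fin N) ℂ)) j j).re) := by
  have hP := norm_sq_mem_doublyStochastic_of_mem_unitaryGroup
    (mul_mem (Unitary.star_mem hρ.1.eigenvectorUnitary.2) U.2)
  simp only [← RCLike.re_to_complex, hρ.1.re_star_mul_mul_apply_self, ← sum_neg_distrib,
    ← neg_mul, ← Real.negMulLog.eq_1]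
  exact Real.concaveOn_negMulLog.sum_le_sum_map_vecMul hP fun i ↦ hρ.eigenvalues_nonneg i

/-- For a density matrix `ρ`, the von Neumann entropy `S(ρ) = −∑ λ_i log λ_i`
(computed from the eigenvalues of `ρ`) is at most the Shannon entropy of the diagonal of `ρ`
in any orthonormal basis (obtained by conjugating with a unitary `U`). -/
theorem vonNeumann_entropy_le_diagonal_shannon {N : ℕ}
    (ρ : Matrix (Fin N) (Fin N) ℂ)
    (hρ : ρ.PosSemidef) (htr : ρ.trace = 1)
    (U : Matrix.unitaryGroup (Fin N) ℂ) :
    -∑ i, hρ.1.eigenvalues i * Real.log (hρ.1.eigenvalues i)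
      ≤ -∑ j, ((star (U : Matrix (Fin N) (Fin N) ℂ) * ρ * (U : Matrix (Fin N) (Fin N) ℂ)) j j).re
          * Real.log (((star (U : Matrix (Fin N) (Fin N) ℂ) * ρ *
              (U : Matrix (Fin N) (Fin N) ℂ)) j j).re) :=
  vonNeumann_entropy_le_diagonal_shannon_general ρ hρ U
end

section
/- For a Hermitian Hamiltonian H on ℂ^N and β > 0, log tr(e^{−βH}) = −β · min over density matrices ρ of (tr(Hρ) − β⁻¹ S(ρ)), with the minimum attained by the Gibbs state ρ_β = e^{−βH}/tr(e^{−βH}). -/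
/-!
Write `H = U diag(ε) U*` and `ρ = V diag(l) V*`. The diagonal `d` of `H` in the eigenbasis of `ρ`
satisfies `tr(Hρ) = ∑ l_j d_j` and `d = P ε` for the doubly stochastic matrix
`P_{ji} = |(V* U)_{ji}|²`, so convexity of `exp` gives Peierls' inequality
`∑ exp(-β d_j) ≤ ∑ exp(-β ε_i) = tr e^{-βH}`. Gibbs' inequality against the weights
`exp(-β d_j) / ∑ exp(-β d)` gives `-log ∑ exp(-β d) ≤ β tr(Hρ) - S(ρ)`. Hence
`-β⁻¹ log tr e^{-βH}` bounds the free energy from below, and it is attained by the Gibbs state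
`U diag(q) U*` with `q_i ∝ exp(-β ε_i)`.
-/

open scoped ComplexOrder

open NormedSpace

open Matrix

namespace Real

variable {ι : Type*} [Fintype ι]

theorem mul_log_le_mul_log_add_sub {p q : ℝ} (hp : 0 ≤ p) (hq : 0 < q) :
    p * log q ≤ p * log p + (q - p) := by
  rcases hp.eq_or_lt with rfl | hp
  · simpa using hq.le
  · have := mul_le_mul_of_nonneg_left (log_le_sub_one_of_pos (div_pos hq hp)) hp.le
    rw [log_div hq.ne' hp.ne', mul_sub_one, mul_div_cancel₀ _ hp.ne'] at this
    linarith

theorem sum_mul_log_le_sum_mul_log {p q : ι → ℝ} (hp : ∀ i, 0 ≤ p i) (hq : ∀ i, 0 < q i)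
    (hpq : ∑ i, q i ≤ ∑ i, p i) : ∑ i, p i * log (q i) ≤ ∑ i, p i * log (p i) :=
  calc ∑ i, p i * log (q i) ≤ ∑ i, (p i * log (p i) + (q i - p i)) :=
        Finset.sum_le_sum fun i _ ↦ mul_log_le_mul_log_add_sub (hp i) (hq i)
    _ ≤ ∑ i, p i * log (p i) := by
        rw [Finset.sum_add_distrib, Finset.sum_sub_distrib]
        linarith

noncomputable def gibbsWeights (E : ι → ℝ) (i : ι) : ℝ :=
  exp (-E i) / ∑ j, exp (-E j)

lemma sum_exp_neg_pos [Nonempty ι] (E : ι → ℝ) : 0 < ∑ i, exp (-E i) :=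
  Finset.sum_pos (fun _ _ ↦ exp_pos _) Finset.univ_nonempty

lemma gibbsWeights_pos (E : ι → ℝ) (i : ι) : 0 < gibbsWeights E i := by
  have : Nonempty ι := ⟨i⟩
  exact div_pos (exp_pos _) (sum_exp_neg_pos E)

lemma sum_gibbsWeights [Nonempty ι] (E : ι → ℝ) : ∑ i, gibbsWeights E i = 1 := by
  simp only [gibbsWeights]
  rw [← Finset.sum_div, div_self (sum_exp_neg_pos E).ne']

lemma log_gibbsWeights (E : ι → ℝ) (i : ι) :
    log (gibbsWeights E i) = -E i - log (∑ j, exp (-E j)) := by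
  have : Nonempty ι := ⟨i⟩
  rw [gibbsWeights, log_div (exp_pos _).ne' (sum_exp_neg_pos E).ne', log_exp]

lemma sum_mul_log_gibbsWeights {p : ι → ℝ} (hp : ∑ i, p i = 1) (E : ι → ℝ) :
    ∑ i, p i * log (gibbsWeights E i) = -∑ i, p i * E i - log (∑ j, exp (-E j)) := by
  simp only [log_gibbsWeights, mul_sub, Finset.sum_sub_distrib, ← Finset.sum_mul, hp, mul_neg,
    Finset.sum_neg_distrib, one_mul]

theorem neg_log_sum_exp_neg_le {p : ι → ℝ} (hp : ∀ i, 0 ≤ p i) (hp1 : ∑ i, p i = 1)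
    (E : ι → ℝ) :
    -log (∑ i, exp (-E i)) ≤ ∑ i, p i * E i + ∑ i, p i * log (p i) := by
  have : Nonempty ι :=
    Finset.univ_nonempty_iff.mp (Finset.nonempty_of_sum_ne_zero (hp1.trans_ne one_ne_zero))
  have := sum_mul_log_le_sum_mul_log hp (gibbsWeights_pos E) (by rw [sum_gibbsWeights, hp1])
  rw [sum_mul_log_gibbsWeights hp1] at this
  linarith

theorem sum_mul_add_sum_mul_log_gibbsWeights [Nonempty ι] (E : ι → ℝ) :
    ∑ i, gibbsWeights E i * E i + ∑ i, gibbsWeights E i * log (gibbsWeights E i)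
      = -log (∑ i, exp (-E i)) := by
  rw [sum_mul_log_gibbsWeights (sum_gibbsWeights E)]
  ring

end Real

theorem ConvexOn.sum_comp_mulVec_le {ι : Type*} [Fintype ι] [DecidableEq ι] {f : ℝ → ℝ}
    (hf : ConvexOn ℝ Set.univ f) {P : Matrix ι ι ℝ} (hP : P ∈ doublyStochastic ℝ ι)
    (x : ι → ℝ) : ∑ i, f ((P *ᵥ x) i) ≤ ∑ j, f (x j) :=
  calc ∑ i, f ((P *ᵥ x) i) ≤ ∑ i, ∑ j, P i j * f (x j) :=
        Finset.sum_le_sum fun i _ ↦ hf.map_sum_le (fun j _ ↦ nonneg_of_mem_doublyStochastic hP)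
          (sum_row_of_mem_doublyStochastic hP i) (fun j _ ↦ Set.mem_univ _)
    _ = ∑ j, f (x j) := by
        rw [Finset.sum_comm]
        simp only [← Finset.sum_mul, sum_col_of_mem_doublyStochastic hP, one_mul]

namespace Matrix

open Unitary

variable {n 𝕜 : Type*} [Fintype n] [DecidableEq n] [RCLike 𝕜]

lemma trace_conjStarAlgAut (U : unitaryGroup n 𝕜) (A : Matrix n n 𝕜) :
    (conjStarAlgAut 𝕜 _ U A).trace = A.trace := by
  rw [conjStarAlgAut_apply, trace_mul_cycle, coe_star_mul_self, one_mul]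

lemma trace_mul_conjStarAlgAut_diagonal (A : Matrix n n 𝕜) (V : unitaryGroup n 𝕜) (c : n → ℝ) :
    (A * conjStarAlgAut 𝕜 _ V (diagonal (RCLike.ofReal ∘ c))).trace
      = ∑ i, c i * conjStarAlgAut 𝕜 _ (star V) A i i := by
  conv_lhs => rw [← (conjStarAlgAut 𝕜 _ V).apply_symm_apply A, conjStarAlgAut_symm, ← map_mul,
    trace_conjStarAlgAut]
  simp [trace, mul_diagonal, mul_comm]

lemma posSemidef_conjStarAlgAut_diagonal (U : unitaryGroup n 𝕜) {c : n → ℝ} (hc : 0 ≤ c) :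
    (conjStarAlgAut 𝕜 _ U (diagonal (RCLike.ofReal ∘ c))).PosSemidef := by
  rw [conjStarAlgAut_apply, isUnit_coe.posSemidef_star_right_conjugate_iff,
    posSemidef_diagonal_iff]
  exact fun i ↦ RCLike.ofReal_nonneg.mpr (hc i)

lemma exp_conjStarAlgAut_diagonal (U : unitaryGroup n 𝕜) (c : n → ℝ) :
    NormedSpace.exp (conjStarAlgAut 𝕜 _ U (diagonal (RCLike.ofReal ∘ c)))
      = conjStarAlgAut 𝕜 _ U (diagonal (RCLike.ofReal ∘ fun i ↦ Real.exp (c i))) := by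
  have hinv : (U : Matrix n n 𝕜)⁻¹ = star (U : Matrix n n 𝕜) :=
    inv_eq_left_inv (coe_star_mul_self U)
  rw [conjStarAlgAut_apply, conjStarAlgAut_apply, ← hinv, exp_conj _ _ isUnit_coe, exp_diagonal]
  congr 3
  ext i
  simp [Real.exp_eq_exp_ℝ, ← RCLike.algebraMap_eq_ofReal, algebraMap_exp_comm]

open Polynomial in
lemma IsHermitian.sum_comp_eigenvalues_eq {A : Matrix n n 𝕜} (hA : A.IsHermitian)
    (U : unitaryGroup n 𝕜) {c : n → ℝ}
    (hc : A = conjStarAlgAut 𝕜 _ U (diagonal (RCLike.ofReal ∘ c))) (g : ℝ → ℝ) :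
    ∑ i, g (hA.eigenvalues i) = ∑ i, g (c i) := by
  have hchar : A.charpoly = ∏ i, (X - C (c i : 𝕜)) := by
    rw [hc, conjStarAlgAut_apply, charpoly_mul_comm, ← mul_assoc, coe_star_mul_self, one_mul,
      charpoly_diagonal]
    rfl
  have hroots : A.charpoly.roots = Multiset.map (RCLike.ofReal ∘ c) Finset.univ.val := by
    rw [hchar, roots_prod]
    · simp
    · simp [Finset.prod_ne_zero_iff, X_sub_C_ne_zero]
  rw [hA.roots_charpoly_eq_eigenvalues, ← Multiset.map_map, ← Multiset.map_map _ c] at hroots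
  have := Multiset.map_injective RCLike.ofReal_injective hroots
  simpa only [Multiset.map_map, Finset.sum_map_val, Function.comp_apply]
    using congr((Multiset.map g $this).sum)

lemma of_norm_sq_mem_doublyStochastic (U : unitaryGroup n 𝕜) :
    of (fun i j ↦ ‖(U : Matrix n n 𝕜) i j‖ ^ 2) ∈ doublyStochastic ℝ n := by
  refine mem_doublyStochastic_iff_sum.mpr ⟨fun _ _ ↦ sq_nonneg _, fun i ↦ ?_, fun j ↦ ?_⟩
  · have h := congr_fun₂ (coe_mul_star_self U) i i
    simp only [mul_apply, coe_star, star_apply, RCLike.star_def, RCLike.mul_conj,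
      one_apply_eq] at h
    exact_mod_cast h
  · have h := congr_fun₂ (coe_star_mul_self U) j j
    simp only [mul_apply, star_apply, RCLike.star_def, RCLike.conj_mul, one_apply_eq] at h
    exact_mod_cast h

lemma diag_conjStarAlgAut_diagonal (U : unitaryGroup n 𝕜) (c : n → ℝ) (i : n) :
    conjStarAlgAut 𝕜 _ U (diagonal (RCLike.ofReal ∘ c)) i i
      = ((of (fun i j ↦ ‖(U : Matrix n n 𝕜) i j‖ ^ 2) *ᵥ c) i : ℝ) := by
  rw [conjStarAlgAut_apply, mul_apply]
  simp only [mul_diagonal, star_apply, RCLike.star_def, mulVec, dotProduct, of_apply,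
    Function.comp_apply]
  push_cast
  refine Finset.sum_congr rfl fun j _ ↦ ?_
  rw [← RCLike.mul_conj]
  ring

/-- Peierls' inequality: in any orthonormal basis the diagonal of `A` is a doubly stochastic
average of its eigenvalues. -/
theorem IsHermitian.sum_comp_re_diag_conjStarAlgAut_le {A : Matrix n n 𝕜} (hA : A.IsHermitian)
    {f : ℝ → ℝ} (hf : ConvexOn ℝ Set.univ f) (V : unitaryGroup n 𝕜) :
    ∑ i, f (RCLike.re (conjStarAlgAut 𝕜 _ V A i i)) ≤ ∑ i, f (hA.eigenvalues i) := by
  conv_lhs => rw [hA.spectral_theorem, ← conjStarAlgAut_mul_apply]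
  simp only [diag_conjStarAlgAut_diagonal, RCLike.ofReal_re]
  exact hf.sum_comp_mulVec_le (of_norm_sq_mem_doublyStochastic _) _

theorem IsHermitian.neg_inv_mul_log_sum_exp_le {H ρ : Matrix n n 𝕜} (hH : H.IsHermitian)
    (hρ : ρ.PosSemidef) (htr : ρ.trace = 1) {β : ℝ} (hβ : 0 < β) :
    -β⁻¹ * Real.log (∑ i, Real.exp (-(β * hH.eigenvalues i)))
      ≤ RCLike.re (H * ρ).trace
        + β⁻¹ * ∑ i, hρ.1.eigenvalues i * Real.log (hρ.1.eigenvalues i) := by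
  set d : n → ℝ := fun i ↦ RCLike.re (conjStarAlgAut 𝕜 _ (star hρ.1.eigenvectorUnitary) H i i)
  have hl1 : ∑ i, hρ.1.eigenvalues i = 1 := by
    have := hρ.1.trace_eq_sum_eigenvalues
    rw [htr] at this
    exact_mod_cast this.symm
  have : Nonempty n :=
    Finset.univ_nonempty_iff.mp (Finset.nonempty_of_sum_ne_zero (hl1.trans_ne one_ne_zero))
  have htrace : RCLike.re (H * ρ).trace = ∑ i, hρ.1.eigenvalues i * d i := by
    conv_lhs => rw [hρ.1.spectral_theorem]
    simp only [trace_mul_conjStarAlgAut_diagonal, map_sum, RCLike.re_ofReal_mul, d]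
  have hpeierls : ∑ i, Real.exp (-(β * d i)) ≤ ∑ i, Real.exp (-(β * hH.eigenvalues i)) :=
    hH.sum_comp_re_diag_conjStarAlgAut_le
      (by simpa using convexOn_exp.comp_linearMap (LinearMap.lsmul ℝ ℝ (-β))) _
  have hgibbs := Real.neg_log_sum_exp_neg_le hρ.eigenvalues_nonneg hl1 fun i ↦ β * d i
  have hlog := Real.log_le_log (Real.sum_exp_neg_pos fun i ↦ β * d i) hpeierls
  have hbound : -Real.log (∑ i, Real.exp (-(β * hH.eigenvalues i)))
      ≤ β * ∑ i, hρ.1.eigenvalues i * d i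
        + ∑ i, hρ.1.eigenvalues i * Real.log (hρ.1.eigenvalues i) := by
    simp only [Finset.mul_sum, mul_left_comm β] at hgibbs ⊢
    linarith
  rw [htrace, neg_mul_comm]
  calc _ ≤ β⁻¹ * (β * ∑ i, hρ.1.eigenvalues i * d i
          + ∑ i, hρ.1.eigenvalues i * Real.log (hρ.1.eigenvalues i)) :=
        mul_le_mul_of_nonneg_left hbound (inv_nonneg.mpr hβ.le)
    _ = _ := by field_simp

lemma IsHermitian.exp_neg_smul {A : Matrix n n 𝕜} (hA : A.IsHermitian) (β : ℝ) :
    NormedSpace.exp (-(β : 𝕜) • A) = conjStarAlgAut 𝕜 _ hA.eigenvectorUnitary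
      (diagonal (RCLike.ofReal ∘ fun i ↦ Real.exp (-(β * hA.eigenvalues i)))) := by
  conv_lhs => rw [hA.spectral_theorem]
  rw [← map_smul, ← diagonal_smul]
  convert exp_conjStarAlgAut_diagonal _ (fun i ↦ -(β * hA.eigenvalues i)) using 4
  ext i
  simp

noncomputable def IsHermitian.gibbsState {A : Matrix n n 𝕜} (hA : A.IsHermitian) (β : ℝ) :
    Matrix n n 𝕜 :=
  conjStarAlgAut 𝕜 _ hA.eigenvectorUnitary
    (diagonal (RCLike.ofReal ∘ Real.gibbsWeights fun i ↦ β * hA.eigenvalues i))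

section gibbsState

variable {A : Matrix n n 𝕜} (hA : A.IsHermitian) (β : ℝ)

lemma IsHermitian.trace_exp_neg_smul :
    (NormedSpace.exp (-(β : 𝕜) • A)).trace
      = ((∑ i, Real.exp (-(β * hA.eigenvalues i)) : ℝ) : 𝕜) := by
  rw [hA.exp_neg_smul, trace_conjStarAlgAut, trace_diagonal]
  push_cast
  rfl

lemma IsHermitian.inv_trace_exp_smul_exp_eq_gibbsState :
    (NormedSpace.exp (-(β : 𝕜) • A)).trace⁻¹ • NormedSpace.exp (-(β : 𝕜) • A)
      = hA.gibbsState β := by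
  rw [hA.trace_exp_neg_smul, hA.exp_neg_smul, ← map_smul, ← diagonal_smul, IsHermitian.gibbsState]
  congr 2
  ext i
  simp [Real.gibbsWeights, div_eq_inv_mul]

lemma IsHermitian.posSemidef_gibbsState : (hA.gibbsState β).PosSemidef :=
  posSemidef_conjStarAlgAut_diagonal _ fun i ↦ (Real.gibbsWeights_pos _ i).le

lemma IsHermitian.trace_gibbsState [Nonempty n] : (hA.gibbsState β).trace = 1 := by
  rw [IsHermitian.gibbsState, trace_conjStarAlgAut, trace_diagonal]
  simp only [Function.comp_apply]
  exact_mod_cast Real.sum_gibbsWeights _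

theorem IsHermitian.free_energy_gibbsState [Nonempty n] (hβ : β ≠ 0)
    (h : (hA.gibbsState β).IsHermitian) :
    RCLike.re (A * hA.gibbsState β).trace
        + β⁻¹ * ∑ i, h.eigenvalues i * Real.log (h.eigenvalues i)
      = -β⁻¹ * Real.log (∑ i, Real.exp (-(β * hA.eigenvalues i))) := by
  rw [h.sum_comp_eigenvalues_eq _ rfl (fun x ↦ x * Real.log x), IsHermitian.gibbsState,
    trace_mul_conjStarAlgAut_diagonal, neg_mul_comm,
    ← Real.sum_mul_add_sum_mul_log_gibbsWeights]
  simp only [hA.conjStarAlgAut_star_eigenvectorUnitary, diagonal_apply_eq, Function.comp_apply,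
    ← RCLike.ofReal_mul, ← RCLike.ofReal_sum, RCLike.ofReal_re]
  rw [mul_add]
  congr 1
  rw [Finset.mul_sum]
  exact Finset.sum_congr rfl fun i _ ↦ by field_simp

end gibbsState

end Matrix

/-- For Hermitian `H` and `β > 0`,
`log tr(e^{−βH}) = −β · min_ρ (tr(Hρ) − β⁻¹ S(ρ))` over density matrices `ρ`, and the
minimum is attained by the Gibbs state `ρ_β = e^{−βH} / tr(e^{−βH})`. -/
theorem log_partition_eq_neg_beta_min_free_energy {N : ℕ} (hN : 0 < N)
    (β : ℝ) (hβ : 0 < β)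
    (H : Matrix (Fin N) (Fin N) ℂ) (hH : H.IsHermitian)
    (Z : ℂ) (hZ : Z = (exp (-(β : ℂ) • H)).trace)
    (ρβ : Matrix (Fin N) (Fin N) ℂ) (hρβ : ρβ = Z⁻¹ • exp (-(β : ℂ) • H)) :
    Real.log Z.re
        = -β * sInf {x : ℝ | ∃ ρ : Matrix (Fin N) (Fin N) ℂ, ∃ h : ρ.PosSemidef,
            ρ.trace = 1 ∧
            x = ((H * ρ).trace).re
                + β⁻¹ * ∑ i, h.1.eigenvalues i * Real.log (h.1.eigenvalues i)}
      ∧ ∃ hg : ρβ.PosSemidef, ρβ.trace = 1 ∧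
          ((H * ρβ).trace).re
              + β⁻¹ * ∑ i, hg.1.eigenvalues i * Real.log (hg.1.eigenvalues i)
            = sInf {x : ℝ | ∃ ρ : Matrix (Fin N) (Fin N) ℂ, ∃ h : ρ.PosSemidef,
                ρ.trace = 1 ∧
                x = ((H * ρ).trace).re
                    + β⁻¹ * ∑ i, h.1.eigenvalues i * Real.log (h.1.eigenvalues i)} := by
  have : Nonempty (Fin N) := ⟨⟨0, hN⟩⟩
  have hZre : Z.re = ∑ i, Real.exp (-(β * hH.eigenvalues i)) := by
    rw [hZ, ← Complex.ofReal_re (∑ i, _)]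
    exact congrArg Complex.re (hH.trace_exp_neg_smul β)
  have hgibbs : ρβ = hH.gibbsState β := by
    rw [hρβ, hZ]
    exact hH.inv_trace_exp_smul_exp_eq_gibbsState β
  subst hgibbs
  have hpsd := hH.posSemidef_gibbsState β
  have hmin := hH.free_energy_gibbsState β hβ.ne' hpsd.1
  have hInf : sInf {x : ℝ | ∃ ρ : Matrix (Fin N) (Fin N) ℂ, ∃ h : ρ.PosSemidef,
      ρ.trace = 1 ∧ x = ((H * ρ).trace).re
        + β⁻¹ * ∑ i, h.1.eigenvalues i * Real.log (h.1.eigenvalues i)}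
      = -β⁻¹ * Real.log (∑ i, Real.exp (-(β * hH.eigenvalues i))) := by
    refine IsLeast.csInf_eq ⟨⟨_, hpsd, hH.trace_gibbsState β, hmin.symm⟩, ?_⟩
    rintro x ⟨ρ, h, htr, rfl⟩
    exact hH.neg_inv_mul_log_sum_exp_le h htr hβ
  refine ⟨?_, hpsd, hH.trace_gibbsState β, hInf ▸ hmin⟩
  rw [hInf, hZre]
  field_simp
end

section
/- Let H be Hermitian with eigenvalues λ and let λ̂ ∈ ℝ^N with ‖λ̂ − λ‖_∞ ≤ ε. Let U be a unitary diagonalizing H (so H = ∑_j λ_j U|j⟩⟨j|U†), let p̂* minimize p ↦ ∑_j p_j λ̂_j + β⁻¹∑_j p_j log p_j, and define ρ* = ∑_j p̂*_j U|j⟩⟨j|U†. Then D(ρ*, ρ_β) ≤ √(2βε), where ρ_β = e^{−βH}/tr(e^{−βH}). -/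
open NormedSpace

private lemma psi_hasDeriv {t : ℝ} (ht : 0 < t) :
    HasDerivAt (fun t : ℝ => Real.log t - 2*(t-1)/(2*t+1)) (t⁻¹ - 6/(2*t+1)^2) t := by
  have hne : (2*t+1) ≠ 0 := by nlinarith
  have h1 : HasDerivAt Real.log t⁻¹ t := Real.hasDerivAt_log (ne_of_gt ht)
  have ha : HasDerivAt (fun t : ℝ => 2*(t-1)) 2 t := by
    simpa using ((hasDerivAt_id t).sub_const 1).const_mul 2
  have hb : HasDerivAt (fun t : ℝ => 2*t+1) 2 t := by
    simpa using ((hasDerivAt_id t).const_mul 2).add_const 1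
  have h2 := ha.div hb hne
  have h3 : (2 * (2 * t + 1) - 2 * (t - 1) * 2) / (2 * t + 1) ^ 2 = 6/(2*t+1)^2 := by
    field_simp; ring
  rw [h3] at h2
  exact h1.sub h2

private lemma psi_mono : MonotoneOn (fun t : ℝ => Real.log t - 2*(t-1)/(2*t+1)) (Set.Ioi 0) := by
  have hint : interior (Set.Ioi (0:ℝ)) = Set.Ioi 0 := isOpen_Ioi.interior_eq
  apply monotoneOn_of_deriv_nonneg (convex_Ioi 0)
  · exact fun t ht => (psi_hasDeriv ht).continuousAt.continuousWithinAt
  · rw [hint]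
    exact fun t ht => (psi_hasDeriv ht).differentiableAt.differentiableWithinAt
  · rw [hint]
    intro t ht
    rw [(psi_hasDeriv ht).deriv]
    rw [Set.mem_Ioi] at ht
    have h1 : (0:ℝ) < (2*t+1)^2 := by nlinarith
    have : 6/(2*t+1)^2 ≤ 1/t := by
      rw [div_le_div_iff₀ h1 ht]; nlinarith [sq_nonneg (2*t-1)]
    rw [one_div] at this
    linarith

private lemma psi_one : Real.log 1 - 2*((1:ℝ)-1)/(2*1+1) = 0 := by norm_num

private lemma log_ge_aux {t : ℝ} (ht : 1 ≤ t) : 2*(t-1)/(2*t+1) ≤ Real.log t := by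
  have := psi_mono (Set.mem_Ioi.mpr one_pos) (Set.mem_Ioi.mpr (lt_of_lt_of_le one_pos ht)) ht
  simp only [] at this
  rw [psi_one] at this
  linarith

private lemma log_le_aux {t : ℝ} (ht0 : 0 < t) (ht : t ≤ 1) :
    Real.log t ≤ 2*(t-1)/(2*t+1) := by
  have := psi_mono (Set.mem_Ioi.mpr ht0) (Set.mem_Ioi.mpr one_pos) ht
  simp only [] at this
  rw [psi_one] at this
  linarith

private lemma h_hasDeriv {t : ℝ} (ht : 0 < t) :
    HasDerivAt (fun t : ℝ => 2*((t+1)*(t*Real.log t - t + 1)) - (t-1)^2)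
      (2*((2*t+1)*Real.log t - 2*(t-1))) t := by
  have h1 : HasDerivAt (fun t : ℝ => t*Real.log t - t + 1) (Real.log t) t := by
    simpa using ((Real.hasDerivAt_mul_log (ne_of_gt ht)).sub (hasDerivAt_id t)).add_const 1
  have h2 : HasDerivAt (fun t : ℝ => t+1) 1 t := (hasDerivAt_id t).add_const 1
  have h3 := (h2.fun_mul h1).const_mul 2
  have h4 : HasDerivAt (fun t : ℝ => (t-1)^2) (2*(t-1)) t := by
    simpa using ((hasDerivAt_id t).sub_const 1).fun_pow 2
  have := h3.fun_sub h4
  exact this.congr_deriv (by ring)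

private lemma h_nonneg {t : ℝ} (ht : 0 < t) :
    0 ≤ 2*((t+1)*(t*Real.log t - t + 1)) - (t-1)^2 := by
  have hone : 2*(((1:ℝ)+1)*(1*Real.log 1 - 1 + 1)) - ((1:ℝ)-1)^2 = 0 := by norm_num
  rcases le_or_gt t 1 with hle | hgt
  · -- antitone on Ioc 0 1
    have hanti : AntitoneOn (fun t : ℝ => 2*((t+1)*(t*Real.log t - t + 1)) - (t-1)^2)
        (Set.Ioc 0 1) := by
      apply antitoneOn_of_deriv_nonpos (convex_Ioc 0 1)
      · exact fun x hx => (h_hasDeriv hx.1).continuousAt.continuousWithinAt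
      · rw [interior_Ioc]
        exact fun x hx => (h_hasDeriv hx.1).differentiableAt.differentiableWithinAt
      · rw [interior_Ioc]
        intro x hx
        rw [(h_hasDeriv hx.1).deriv]
        have hpos : (0:ℝ) < 2*x+1 := by nlinarith [hx.1]
        have h5 : Real.log x * (2*x+1) ≤ 2*(x-1) := by
          rw [← le_div_iff₀ hpos]; exact log_le_aux hx.1 hx.2.le
        nlinarith
    have := hanti (Set.mem_Ioc.mpr ⟨ht, hle⟩) (Set.mem_Ioc.mpr ⟨one_pos, le_refl 1⟩) hle
    simp only [] at this
    rw [hone] at this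
    linarith
  · have hmono : MonotoneOn (fun t : ℝ => 2*((t+1)*(t*Real.log t - t + 1)) - (t-1)^2)
        (Set.Ici 1) := by
      apply monotoneOn_of_deriv_nonneg (convex_Ici 1)
      · exact fun x hx => (h_hasDeriv (lt_of_lt_of_le one_pos hx)).continuousAt.continuousWithinAt
      · rw [interior_Ici]
        exact fun x hx =>
          (h_hasDeriv (lt_of_lt_of_le one_pos (le_of_lt hx))).differentiableAt.differentiableWithinAt
      · rw [interior_Ici]
        intro x hx
        rw [Set.mem_Ioi] at hx
        rw [(h_hasDeriv (lt_of_lt_of_le one_pos hx.le)).deriv]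
        have hpos : (0:ℝ) < 2*x+1 := by nlinarith
        have h5 : 2*(x-1) ≤ Real.log x * (2*x+1) := by
          rw [← div_le_iff₀ hpos]; exact log_ge_aux hx.le
        nlinarith
    have := hmono (Set.mem_Ici.mpr (le_refl 1)) (Set.mem_Ici.mpr hgt.le) hgt.le
    simp only [] at this
    rw [hone] at this
    linarith

/-- pointwise inequality: `(x-y)^2 ≤ 2(x+y)(x log x - x log y - x + y)` -/
private lemma key_pointwise {x y : ℝ} (hx : 0 ≤ x) (hy : 0 < y) :
    (x - y)^2 ≤ 2*(x+y)*(x*Real.log x - x*Real.log y - x + y) := by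
  rcases eq_or_lt_of_le hx with rfl | hx0
  · rw [zero_mul, zero_mul]
    nlinarith
  · have ht : 0 < x/y := div_pos hx0 hy
    have h := h_nonneg ht
    have hlog : Real.log (x/y) = Real.log x - Real.log y := Real.log_div (ne_of_gt hx0) (ne_of_gt hy)
    have h3 : (2*((x/y+1)*((x/y)*Real.log (x/y) - x/y + 1)) - (x/y-1)^2) * y^2
        = 2*(x+y)*(x*Real.log x - x*Real.log y - x + y) - (x-y)^2 := by
      rw [hlog]
      field_simp
    have h4 := mul_nonneg h (sq_nonneg y)
    rw [h3] at h4
    linarith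

private lemma half_l1_le_sqrt {n : ℕ} (p q : Fin n → ℝ) (hp : ∀ j, 0 ≤ p j) (hq : ∀ j, 0 < q j)
    (hp1 : ∑ j, p j = 1) (hq1 : ∑ j, q j = 1) :
    (1/2) * ∑ j, |p j - q j| ≤
      Real.sqrt (∑ j, (p j * Real.log (p j) - p j * Real.log (q j) - p j + q j)) := by
  set τ : Fin n → ℝ := fun j => p j * Real.log (p j) - p j * Real.log (q j) - p j + q j with hτ
  have hτ0 : ∀ j, 0 ≤ τ j := by
    intro j
    have hpos : (0:ℝ) < 2*(p j + q j) := by linarith [hp j, hq j]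
    simp only [hτ]
    nlinarith [key_pointwise (hp j) (hq j), sq_nonneg (p j - q j), hpos]
  have hab : ∀ j, |p j - q j| ≤ Real.sqrt (2*(p j + q j)) * Real.sqrt (τ j) := by
    intro j
    have hpos : (0:ℝ) ≤ 2*(p j + q j) := by linarith [hp j, hq j]
    rw [← Real.sqrt_mul hpos, ← Real.sqrt_sq_eq_abs]
    exact Real.sqrt_le_sqrt (key_pointwise (hp j) (hq j))
  have hCS := Real.sum_sqrt_mul_sqrt_le (f := fun j => 2*(p j + q j)) (g := τ) Finset.univ
    (fun j => by linarith [hp j, hq j]) hτ0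
  have hsum : ∑ j, 2*(p j + q j) = (4:ℝ) := by
    rw [← Finset.mul_sum, Finset.sum_add_distrib, hp1, hq1]; norm_num
  have h4 : Real.sqrt (∑ j, 2*(p j + q j)) = 2 := by
    rw [hsum, show (4:ℝ) = 2^2 by norm_num, Real.sqrt_sq (by norm_num)]
  have h5 : ∑ j, |p j - q j| ≤ 2 * Real.sqrt (∑ j, τ j) := by
    calc ∑ j, |p j - q j| ≤ ∑ j, Real.sqrt (2*(p j + q j)) * Real.sqrt (τ j) :=
          Finset.sum_le_sum (fun j _ => hab j)
      _ ≤ Real.sqrt (∑ j, 2*(p j + q j)) * Real.sqrt (∑ j, τ j) := hCS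
      _ = 2 * Real.sqrt (∑ j, τ j) := by rw [h4]
  linarith

open Polynomial in
private lemma charpoly_unitary_conj {n : ℕ} {V D : Matrix (Fin n) (Fin n) ℂ}
    (hV : V ∈ Matrix.unitaryGroup (Fin n) ℂ) :
    (V * D * star V).charpoly = D.charpoly := by
  classical
  have h1 : V * star V = 1 := Matrix.mem_unitaryGroup_iff.mp hV
  set f : Matrix (Fin n) (Fin n) ℂ →+* Matrix (Fin n) (Fin n) (Polynomial ℂ) :=
    (Polynomial.C : ℂ →+* Polynomial ℂ).mapMatrix with hf
  have hf1 : f V * f (star V) = 1 := by rw [← map_mul, h1, map_one]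
  have hscal : ∀ M : Matrix (Fin n) (Fin n) (Polynomial ℂ),
      Matrix.scalar (Fin n) (X : Polynomial ℂ) * M = M * Matrix.scalar (Fin n) (X : Polynomial ℂ) :=
    fun M => Matrix.scalar_commute _ (fun r' => Commute.all _ _) M
  have hcm : Matrix.charmatrix (V * D * star V) = f V * Matrix.charmatrix D * f (star V) := by
    unfold Matrix.charmatrix
    rw [mul_sub, sub_mul]
    congr 1
    · rw [← hscal (f V), mul_assoc, hf1, mul_one]
    · rw [← hf, map_mul, map_mul]
  rw [Matrix.charpoly, Matrix.charpoly, hcm, Matrix.det_mul, Matrix.det_mul]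
  have hdet : (f V).det * (f (star V)).det = 1 := by
    rw [← Matrix.det_mul, hf1, Matrix.det_one]
  rw [mul_right_comm, hdet, one_mul]

open Polynomial in
private lemma sum_abs_eigenvalues_of_conj_diag {n : ℕ} {V : Matrix (Fin n) (Fin n) ℂ}
    (hV : V ∈ Matrix.unitaryGroup (Fin n) ℂ) (d : Fin n → ℝ)
    {A : Matrix (Fin n) (Fin n) ℂ} (hA : A.IsHermitian)
    (hAd : A = V * Matrix.diagonal (fun j => (d j : ℂ)) * star V) :
    ∑ i, |hA.eigenvalues i| = ∑ j, |d j| := by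
  classical
  have e : ∀ (g : Fin n → ℂ), (∏ i, (X - C (g i))).roots = Finset.univ.val.map g := by
    intro g
    rw [Finset.prod_eq_multiset_prod,
      show (fun i => X - C (g i)) = ((fun a : ℂ => X - C a) ∘ g) from rfl,
      ← Multiset.map_map (fun a : ℂ => X - C a) g,
      Polynomial.roots_multiset_prod_X_sub_C]
  have hdiagcp : ∀ (g : Fin n → ℂ), (Matrix.diagonal g).charpoly = ∏ i, (X - C (g i)) := by
    intro g
    rw [Matrix.charpoly_of_upperTriangular _ (Matrix.blockTriangular_diagonal g)]
    simp [Matrix.diagonal_apply_eq]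
  have h1 : A.charpoly = ∏ j, (X - C ((d j : ℂ))) := by
    rw [hAd, charpoly_unitary_conj hV, hdiagcp]
  have h2 : A.charpoly = ∏ i, (X - C ((hA.eigenvalues i : ℂ))) := by
    conv_lhs => rw [hA.spectral_theorem]
    rw [Unitary.conjStarAlgAut_apply, charpoly_unitary_conj (Matrix.IsHermitian.eigenvectorUnitary hA).2, hdiagcp]
    rfl
  have hms : Finset.univ.val.map (fun i => ((hA.eigenvalues i : ℝ) : ℂ))
      = Finset.univ.val.map (fun j => ((d j : ℝ) : ℂ)) := by
    rw [← e, ← e, ← h1, ← h2]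
  calc ∑ i, |hA.eigenvalues i| = ∑ i, ‖((hA.eigenvalues i : ℂ))‖ := by
        simp [Complex.norm_real]
    _ = ((Finset.univ.val.map (fun i => ((hA.eigenvalues i : ℝ) : ℂ))).map (fun z : ℂ => ‖z‖)).sum := by
        rw [Multiset.map_map]; rfl
    _ = ((Finset.univ.val.map (fun j => ((d j : ℝ) : ℂ))).map (fun z : ℂ => ‖z‖)).sum := by rw [hms]
    _ = ∑ j, ‖((d j : ℂ))‖ := by rw [Multiset.map_map]; rfl
    _ = ∑ j, |d j| := by simp [Complex.norm_real]

/-- Let `H` be Hermitian with eigenvalues `λ`, `λ̂` an `ε`-close (in `ℓ∞`)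
vector, `U` a unitary diagonalizing `H`, `p̂*` a minimizer of
`p ↦ ∑ p_j λ̂_j + β⁻¹ ∑ p_j log p_j` over the probability simplex, and
`ρ* = ∑ p̂*_j U|j⟩⟨j|U† = U diag(p̂*) U†`. Then the trace distance between `ρ*` and the
Gibbs state `ρ_β = e^{−βH}/tr(e^{−βH})` is at most `√(2βε)`. -/
theorem approx_gibbs_state_trace_distance {N : ℕ} (hN : 0 < N)
    (β ε : ℝ) (hβ : 0 < β) (hε : 0 ≤ ε)
    (H : Matrix (Fin N) (Fin N) ℂ) (hH : H.IsHermitian)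
    (lamh : Fin N → ℝ) (hclose : ‖lamh - hH.eigenvalues‖ ≤ ε)
    (U : Matrix.unitaryGroup (Fin N) ℂ)
    (hU : H = (U : Matrix (Fin N) (Fin N) ℂ)
        * Matrix.diagonal (fun j => (hH.eigenvalues j : ℂ))
        * star (U : Matrix (Fin N) (Fin N) ℂ))
    (phat : Fin N → ℝ) (hphat0 : ∀ j, 0 ≤ phat j) (hphat1 : ∑ j, phat j = 1)
    (hmin : ∀ p : Fin N → ℝ, (∀ j, 0 ≤ p j) → ∑ j, p j = 1 →
      ∑ j, phat j * lamh j + β⁻¹ * ∑ j, phat j * Real.log (phat j)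
        ≤ ∑ j, p j * lamh j + β⁻¹ * ∑ j, p j * Real.log (p j))
    (ρstar ρβ : Matrix (Fin N) (Fin N) ℂ)
    (hρstar : ρstar = (U : Matrix (Fin N) (Fin N) ℂ)
        * Matrix.diagonal (fun j => (phat j : ℂ)) * star (U : Matrix (Fin N) (Fin N) ℂ))
    (hρβ : ρβ = ((exp (-(β : ℂ) • H)).trace)⁻¹ • exp (-(β : ℂ) • H))
    (hdiff : (ρstar - ρβ).IsHermitian) :
    (1 / 2) * ∑ i, |hdiff.eigenvalues i| ≤ Real.sqrt (2 * β * ε) := by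
  classical
  have hNe : Nonempty (Fin N) := ⟨⟨0, hN⟩⟩
  set lam : Fin N → ℝ := hH.eigenvalues with hlam
  set Z : ℝ := ∑ j, Real.exp (-(β * lam j)) with hZ
  have hZpos : 0 < Z := Finset.sum_pos (fun j _ => Real.exp_pos _) Finset.univ_nonempty
  set q : Fin N → ℝ := fun j => Real.exp (-(β * lam j)) / Z with hq
  have hq0 : ∀ j, 0 < q j := fun j => div_pos (Real.exp_pos _) hZpos
  have hq1 : ∑ j, q j = 1 := by
    rw [hq, ← Finset.sum_div, ← hZ, div_self hZpos.ne']
  -- matrix part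
  have h1 : (U : Matrix (Fin N) (Fin N) ℂ) * star (U : Matrix (Fin N) (Fin N) ℂ) = 1 :=
    Matrix.mem_unitaryGroup_iff.mp U.2
  have h2 : star (U : Matrix (Fin N) (Fin N) ℂ) * (U : Matrix (Fin N) (Fin N) ℂ) = 1 :=
    Matrix.mem_unitaryGroup_iff'.mp U.2
  set u : (Matrix (Fin N) (Fin N) ℂ)ˣ :=
    ⟨(U : Matrix (Fin N) (Fin N) ℂ), star (U : Matrix (Fin N) (Fin N) ℂ), h1, h2⟩ with hu
  have hsm : -(β : ℂ) • H = (U : Matrix (Fin N) (Fin N) ℂ)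
      * Matrix.diagonal (fun j => ((-(β * lam j) : ℝ) : ℂ)) * star (U : Matrix (Fin N) (Fin N) ℂ) := by
    rw [hU]
    have hD : Matrix.diagonal (fun j => ((-(β * lam j) : ℝ) : ℂ))
        = -(β : ℂ) • Matrix.diagonal (fun j => ((lam j : ℝ) : ℂ)) := by
      rw [← Matrix.diagonal_smul]
      apply congrArg Matrix.diagonal
      funext j
      simp only [Pi.smul_apply, smul_eq_mul]
      push_cast
      ring
    rw [hD, mul_smul_comm, smul_mul_assoc]
  have hexp : exp (-(β : ℂ) • H) = (U : Matrix (Fin N) (Fin N) ℂ)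
      * Matrix.diagonal (fun j => ((Real.exp (-(β * lam j)) : ℝ) : ℂ))
      * star (U : Matrix (Fin N) (Fin N) ℂ) := by
    rw [hsm]
    have hconj := Matrix.exp_units_conj u
      (Matrix.diagonal (fun j => ((-(β * lam j) : ℝ) : ℂ)))
    have hcu : ((u : (Matrix (Fin N) (Fin N) ℂ)ˣ) : Matrix (Fin N) (Fin N) ℂ)
        = (U : Matrix (Fin N) (Fin N) ℂ) := rfl
    have hcu' : ((u⁻¹ : (Matrix (Fin N) (Fin N) ℂ)ˣ) : Matrix (Fin N) (Fin N) ℂ)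
        = star (U : Matrix (Fin N) (Fin N) ℂ) := rfl
    rw [hcu, hcu'] at hconj
    rw [hconj, Matrix.exp_diagonal]
    have hE : exp (fun j => ((-(β * lam j) : ℝ) : ℂ))
        = fun j => ((Real.exp (-(β * lam j)) : ℝ) : ℂ) := by
      funext j
      rw [Pi.exp_def, ← Complex.exp_eq_exp_ℂ]
      exact (Complex.ofReal_exp _).symm
    rw [hE]
  have htr : (exp (-(β : ℂ) • H)).trace = (Z : ℂ) := by
    rw [hexp, Matrix.trace_mul_comm, ← mul_assoc, h2, one_mul, Matrix.trace_diagonal, hZ]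
    push_cast
    rfl
  have hρβ' : ρβ = (U : Matrix (Fin N) (Fin N) ℂ)
      * Matrix.diagonal (fun j => ((q j : ℝ) : ℂ)) * star (U : Matrix (Fin N) (Fin N) ℂ) := by
    rw [hρβ, htr, hexp]
    have hD : Matrix.diagonal (fun j => ((q j : ℝ) : ℂ))
        = ((Z : ℂ))⁻¹ • Matrix.diagonal (fun j => ((Real.exp (-(β * lam j)) : ℝ) : ℂ)) := by
      rw [← Matrix.diagonal_smul]
      apply congrArg Matrix.diagonal
      funext j
      simp only [hq, Pi.smul_apply, smul_eq_mul]
      rw [Complex.ofReal_div, div_eq_inv_mul]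
    rw [hD, mul_smul_comm, smul_mul_assoc]
  have hd : ρstar - ρβ = (U : Matrix (Fin N) (Fin N) ℂ)
      * Matrix.diagonal (fun j => ((phat j - q j : ℝ) : ℂ)) * star (U : Matrix (Fin N) (Fin N) ℂ) := by
    rw [hρstar, hρβ']
    have hD : Matrix.diagonal (fun j => ((phat j - q j : ℝ) : ℂ))
        = Matrix.diagonal (fun j => ((phat j : ℝ) : ℂ))
          - Matrix.diagonal (fun j => ((q j : ℝ) : ℂ)) := by
      rw [Matrix.diagonal_sub]
      apply congrArg Matrix.diagonal
      funext j
      push_cast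
      ring
    rw [hD, mul_sub, sub_mul]
  have hsum_eig : ∑ i, |hdiff.eigenvalues i| = ∑ j, |phat j - q j| :=
    sum_abs_eigenvalues_of_conj_diag U.2 (fun j => phat j - q j) hdiff hd
  -- KL part
  have hlam_close : ∀ j, |lamh j - lam j| ≤ ε := by
    intro j
    have h := norm_le_pi_norm (lamh - hH.eigenvalues) j
    simp only [Pi.sub_apply, Real.norm_eq_abs] at h
    exact le_trans h hclose
  have hlogq : ∀ j, Real.log (q j) = -(β * lam j) - Real.log Z := by
    intro j
    rw [hq]
    simp only []
    rw [Real.log_div (Real.exp_ne_zero _) hZpos.ne', Real.log_exp]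
  have hsumlogq : ∀ c : Fin N → ℝ,
      ∑ j, c j * Real.log (q j) = -β * (∑ j, c j * lam j) - (∑ j, c j) * Real.log Z := by
    intro c
    have : ∑ j, c j * Real.log (q j)
        = ∑ j, (-β * (c j * lam j) - c j * Real.log Z) := by
      apply Finset.sum_congr rfl
      intro j _
      rw [hlogq j]
      ring
    rw [this, Finset.sum_sub_distrib, ← Finset.mul_sum, ← Finset.sum_mul]
  have hsp := hsumlogq phat
  have hsq := hsumlogq q
  rw [hphat1, one_mul] at hsp
  rw [hq1, one_mul] at hsq
  -- q's log-sum identity : ∑ q log q = -β ∑ q lam - log Z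
  have hqq : ∑ j, q j * Real.log (q j) = -β * (∑ j, q j * lam j) - Real.log Z := hsq
  have hm := hmin q (fun j => (hq0 j).le) hq1
  have hm' : β * (∑ j, phat j * lamh j) + ∑ j, phat j * Real.log (phat j)
      ≤ β * (∑ j, q j * lamh j) + ∑ j, q j * Real.log (q j) := by
    have h := mul_le_mul_of_nonneg_left hm hβ.le
    rw [mul_add, mul_add, ← mul_assoc, ← mul_assoc, mul_inv_cancel₀ hβ.ne', one_mul, one_mul] at h
    exact h
  have hc1 : ∑ j, phat j * lam j - ∑ j, phat j * lamh j ≤ ε := by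
    have h : ∀ j, phat j * lam j - phat j * lamh j ≤ phat j * ε := by
      intro j
      have := abs_le.mp (hlam_close j)
      nlinarith [hphat0 j]
    calc ∑ j, phat j * lam j - ∑ j, phat j * lamh j
        = ∑ j, (phat j * lam j - phat j * lamh j) := (Finset.sum_sub_distrib _ _).symm
      _ ≤ ∑ j, phat j * ε := Finset.sum_le_sum (fun j _ => h j)
      _ = ε := by rw [← Finset.sum_mul, hphat1, one_mul]
  have hc2 : ∑ j, q j * lamh j - ∑ j, q j * lam j ≤ ε := by
    have h : ∀ j, q j * lamh j - q j * lam j ≤ q j * ε := by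
      intro j
      have := abs_le.mp (hlam_close j)
      nlinarith [(hq0 j).le]
    calc ∑ j, q j * lamh j - ∑ j, q j * lam j
        = ∑ j, (q j * lamh j - q j * lam j) := (Finset.sum_sub_distrib _ _).symm
      _ ≤ ∑ j, q j * ε := Finset.sum_le_sum (fun j _ => h j)
      _ = ε := by rw [← Finset.sum_mul, hq1, one_mul]
  set K : ℝ := ∑ j, (phat j * Real.log (phat j) - phat j * Real.log (q j) - phat j + q j)
    with hK
  have hKsplit : K = ∑ j, phat j * Real.log (phat j) - ∑ j, phat j * Real.log (q j) := by
    rw [hK, Finset.sum_add_distrib, Finset.sum_sub_distrib, Finset.sum_sub_distrib, hphat1, hq1]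
    ring
  have hKle : K ≤ 2 * β * ε := by
    rw [hKsplit, hsp]
    nlinarith [mul_le_mul_of_nonneg_left hc1 hβ.le, mul_le_mul_of_nonneg_left hc2 hβ.le, hm', hqq]
  have hmain := half_l1_le_sqrt phat q hphat0 hq0 hphat1 hq1
  rw [hsum_eig]
  exact le_trans hmain (Real.sqrt_le_sqrt hKle)
end

section
/- For any Hermitian matrix H on ℂ^N and any orthonormal basis {|ψ_j⟩}, the vector of eigenvalues of H majorizes the vector of diagonal elements (⟨ψ_j|H|ψ_j⟩)_j (Schur–Horn inequality direction). -/
/-!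
Diagonalize `H = V D Vᴴ`. The `j`-th diagonal entry of `Uᴴ H U` is then `∑ₐ |Wⱼₐ|² λₐ` with
`W = Uᴴ V` unitary, so the diagonal is `S λ` for the doubly stochastic matrix `Sⱼₐ = |Wⱼₐ|²`.
Summing `S λ` over any `k` indices gives `∑ₐ cₐ λₐ` with weights `cₐ ∈ [0, 1]` of total `k`, and
comparing against the threshold `μ = λ₍ₖ₊₁₎` shows such a sum is at most the sum of the `k`
largest eigenvalues.
-/

open Finset Matrix

namespace Matrix

variable {m n : Type*} [Fintype n] [DecidableEq n]

theorem mul_diagonal_mul_conjTranspose_apply_self (V : Matrix m n ℂ) (d : n → ℝ) (j : m) :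
    (V * diagonal (fun a => (d a : ℂ)) * Vᴴ) j j = ↑(∑ a, Complex.normSq (V j a) * d a) := by
  simp only [mul_apply, diagonal_apply, mul_ite, mul_zero, sum_ite_eq', mem_univ, if_true,
    conjTranspose_apply, Complex.star_def, Complex.ofReal_sum, Complex.ofReal_mul]
  refine sum_congr rfl fun a _ => ?_
  rw [Complex.normSq_eq_conj_mul_self]
  ring

theorem normSq_mem_doublyStochastic {U : Matrix n n ℂ} (hU : U ∈ unitaryGroup n ℂ) :
    of (fun i j => Complex.normSq (U i j)) ∈ doublyStochastic ℝ n := by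
  refine mem_doublyStochastic_iff_sum.2
    ⟨fun i j => Complex.normSq_nonneg _, fun i => ?_, fun j => ?_⟩
  · have h := congrFun (congrFun (mem_unitaryGroup_iff.1 hU) i) i
    simp only [mul_apply, star_apply, Complex.star_def, Complex.mul_conj, one_apply_eq] at h
    exact_mod_cast h
  · have h := congrFun (congrFun (mem_unitaryGroup_iff'.1 hU) j) j
    simp only [mul_apply, star_apply, Complex.star_def, ← Complex.normSq_eq_conj_mul_self,
      one_apply_eq] at h
    exact_mod_cast h

theorem IsHermitian.exists_mem_doublyStochastic_re_diag_eq_mulVec {H : Matrix n n ℂ}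
    (hH : H.IsHermitian) (U : unitaryGroup n ℂ) :
    ∃ S ∈ doublyStochastic ℝ n,
      (fun j => ((star (U : Matrix n n ℂ) * H * U) j j).re) = S *ᵥ hH.eigenvalues := by
  set V := star U * hH.eigenvectorUnitary
  refine ⟨_, normSq_mem_doublyStochastic V.2, funext fun j => ?_⟩
  have hconj : star (U : Matrix n n ℂ) * H * U
      = V * diagonal (fun a => (hH.eigenvalues a : ℂ)) * (V : Matrix n n ℂ)ᴴ := by
    conv_lhs => rw [hH.spectral_theorem, Unitary.conjStarAlgAut_apply]
    simp only [V, Submonoid.coe_mul, Unitary.coe_star, ← star_eq_conjTranspose, star_mul,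
      star_star, mul_assoc]
    rfl
  rw [hconj, mul_diagonal_mul_conjTranspose_apply_self, Complex.ofReal_re]
  rfl

end Matrix

theorem sum_mul_le_sum_of_forall_le_of_forall_ge {ι : Type*} [Fintype ι] {T : Finset ι}
    {f c : ι → ℝ} {μ : ℝ} (hT : ∀ a ∈ T, μ ≤ f a) (hTc : ∀ a ∉ T, f a ≤ μ)
    (hc₀ : ∀ a, 0 ≤ c a) (hc₁ : ∀ a, c a ≤ 1) (hc : ∑ a, c a = #T) :
    ∑ a, c a * f a ≤ ∑ a ∈ T, f a := by
  classical
  -- every term of `∑ (c a - 𝟙_T a) (f a - μ)` is nonpositive, and its `μ`-part vanishes as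
  -- `∑ c = #T`
  have hterm : ∀ a, (c a - if a ∈ T then 1 else 0) * (f a - μ) ≤ 0 := by
    intro a
    split_ifs with ha
    · exact mul_nonpos_of_nonpos_of_nonneg (by linarith [hc₁ a]) (by linarith [hT a ha])
    · exact mul_nonpos_of_nonneg_of_nonpos (by linarith [hc₀ a]) (by linarith [hTc a ha])
  have hexpand : ∑ a, (c a - if a ∈ T then 1 else 0) * (f a - μ)
      = ∑ a, c a * f a - ∑ a ∈ T, f a - μ * (∑ a, c a - #T) := by
    simp only [sub_mul, ite_mul, one_mul, zero_mul, sum_sub_distrib, sum_ite_mem, univ_inter,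
      mul_sub, ← sum_mul, sum_const, nsmul_eq_mul]
    ring
  have := sum_nonpos fun a (_ : a ∈ univ) => hterm a
  rw [hexpand, hc, sub_self, mul_zero] at this
  linarith

theorem sum_mulVec_le_of_mem_doublyStochastic {ι : Type*} [Fintype ι] [DecidableEq ι]
    {S : Matrix ι ι ℝ} (hS : S ∈ doublyStochastic ℝ ι) {T : Finset ι} {f : ι → ℝ} {μ : ℝ}
    (hT : ∀ a ∈ T, μ ≤ f a) (hTc : ∀ a ∉ T, f a ≤ μ) :
    ∑ j ∈ T, (S *ᵥ f) j ≤ ∑ a ∈ T, f a := by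
  calc ∑ j ∈ T, (S *ᵥ f) j = ∑ a, (∑ j ∈ T, S j a) * f a := by
        simp only [mulVec, dotProduct, sum_mul]
        exact sum_comm
    _ ≤ ∑ a ∈ T, f a := by
        refine sum_mul_le_sum_of_forall_le_of_forall_ge hT hTc
          (fun a => sum_nonneg fun j _ => nonneg_of_mem_doublyStochastic hS) (fun a => ?_) ?_
        · calc ∑ j ∈ T, S j a ≤ ∑ j, S j a :=
                sum_le_sum_of_subset_of_nonneg (subset_univ T)
                  fun j _ _ => nonneg_of_mem_doublyStochastic hS
            _ = 1 := sum_col_of_mem_doublyStochastic hS a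
        · rw [sum_comm]
          simp [sum_row_of_mem_doublyStochastic hS]

theorem Fin.exists_threshold_of_antitone {N : ℕ} {α : Type*} [ConditionallyCompleteLinearOrder α]
    {f : Fin N → α} (hf : Antitone f) (k : ℕ) :
    ∃ μ, (∀ j : Fin N, (j : ℕ) < k → μ ≤ f j) ∧ ∀ j : Fin N, k ≤ (j : ℕ) → f j ≤ μ := by
  rcases lt_or_ge k N with hk | hk
  · exact ⟨f ⟨k, hk⟩, fun j hj => hf (Fin.le_def.2 hj.le), fun j hj => hf (Fin.le_def.2 hj)⟩
  · exact ⟨⨅ j, f j, fun j _ => ciInf_le (Set.finite_range f).bddBelow j,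
      fun j hj => absurd j.isLt (by omega)⟩

theorem Fin.exists_perm_antitone {N : ℕ} {α : Type*} [LinearOrder α] (f : Fin N → α) :
    ∃ σ : Equiv.Perm (Fin N), Antitone (f ∘ σ) :=
  ⟨Tuple.sort (OrderDual.toDual ∘ f), Tuple.monotone_sort (OrderDual.toDual ∘ f)⟩

/-- For a Hermitian matrix `H` and any orthonormal basis (given by a unitary
`U`, so the diagonal entries in that basis are `(U† H U)_{jj}`), the vector of eigenvalues
of `H` majorizes the vector of diagonal elements: after sorting both in decreasing order
(via permutations `σ`, `τ`), all partial sums of the eigenvalues dominate those of the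
diagonal, with equal total sums. -/
theorem eigenvalues_majorize_diagonal {N : ℕ}
    (H : Matrix (Fin N) (Fin N) ℂ) (hH : H.IsHermitian)
    (U : Matrix.unitaryGroup (Fin N) ℂ)
    (dvec : Fin N → ℝ)
    (hdvec : ∀ j, dvec j = ((star (U : Matrix (Fin N) (Fin N) ℂ) * H *
        (U : Matrix (Fin N) (Fin N) ℂ)) j j).re) :
    ∃ σ τ : Equiv.Perm (Fin N),
      Antitone (hH.eigenvalues ∘ σ) ∧ Antitone (dvec ∘ τ) ∧
      (∀ k : ℕ, ∑ j ∈ Finset.univ.filter (fun j : Fin N => (j : ℕ) < k), dvec (τ j)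
          ≤ ∑ j ∈ Finset.univ.filter (fun j : Fin N => (j : ℕ) < k), hH.eigenvalues (σ j)) ∧
      ∑ j, hH.eigenvalues j = ∑ j, dvec j := by
  obtain ⟨S, hS, hdiag⟩ := hH.exists_mem_doublyStochastic_re_diag_eq_mulVec U
  obtain rfl : dvec = S *ᵥ hH.eigenvalues := (funext hdvec).trans hdiag
  obtain ⟨σ, hσ⟩ := Fin.exists_perm_antitone hH.eigenvalues
  obtain ⟨τ, hτ⟩ := Fin.exists_perm_antitone (S *ᵥ hH.eigenvalues)
  refine ⟨σ, τ, hσ, hτ, fun k => ?_, (sum_mulVec_of_mem_doublyStochastic hS).symm⟩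
  obtain ⟨μ, hμ_lt, hμ_ge⟩ := Fin.exists_threshold_of_antitone hσ k
  have hS' : S.submatrix τ σ ∈ doublyStochastic ℝ (Fin N) :=
    reindex_mem_doublyStochastic (e₁ := τ.symm) (e₂ := σ.symm) hS
  have hsorted : (S *ᵥ hH.eigenvalues) ∘ τ = S.submatrix τ σ *ᵥ (hH.eigenvalues ∘ σ) := by
    rw [submatrix_mulVec_equiv, Function.comp_assoc, Equiv.self_comp_symm, Function.comp_id]
  calc ∑ j ∈ univ.filter (fun j : Fin N => (j : ℕ) < k), (S *ᵥ hH.eigenvalues) (τ j)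
      = ∑ j ∈ univ.filter (fun j : Fin N => (j : ℕ) < k),
          (S.submatrix τ σ *ᵥ (hH.eigenvalues ∘ σ)) j :=
        sum_congr rfl fun j _ => congrFun hsorted j
    _ ≤ _ := sum_mulVec_le_of_mem_doublyStochastic hS'
        (fun j hj => hμ_lt j (mem_filter.1 hj).2) (fun j hj => hμ_ge j (by simpa using hj))
end
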